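/- Let S ⊆ A be a set of alternatives and suppose a ∈ S minimizes the PAV-score decrease w_PAV(S) − w_PAV(S∖{·}) among all alternatives of S, with Δ = w_PAV(S) − w_PAV(S∖{a}) > 0. Then |S| ≤ n/Δ, where n is the number of voters. -/

import Mathlib

open Finset

/-- The PAV-score of a set `S` of alternatives: `∑_i ∑_{j=1}^{|A_i ∩ S|} 1/j`. -/
def pavScore {n m : ℕ} (App : Fin n → Finset (Fin m)) (S : Finset (Fin m)) : ℚ :=
  ∑ i, ∑ j ∈ Finset.range (App i ∩ S).card, (1 : ℚ) / (j + 1)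

/-!
Removing `b` from `S` costs voter `i` exactly `1 / |A_i ∩ S|` if `b ∈ A_i ∩ S`, and nothing
otherwise. Summed over all `b ∈ S`, each voter therefore loses at most `1`, so the marginal
contributions of the members of `S` add up to at most `n`. Since each of them is at least the
minimum `Δ`, we get `|S| Δ ≤ n`.
-/

theorem pavScore_eq_sum_harmonic {n m : ℕ} (App : Fin n → Finset (Fin m))
    (S : Finset (Fin m)) : pavScore App S = ∑ i, harmonic (App i ∩ S).card := by
  simp [pavScore, harmonic, one_div]

theorem harmonic_sub_harmonic_pred {k : ℕ} (hk : 0 < k) :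
    harmonic k - harmonic (k - 1) = 1 / k := by
  obtain ⟨j, rfl⟩ := Nat.exists_eq_add_of_lt hk
  simp

theorem pavScore_sub_pavScore_erase {n m : ℕ} (App : Fin n → Finset (Fin m))
    (S : Finset (Fin m)) (b : Fin m) :
    pavScore App S - pavScore App (S.erase b) =
      ∑ i, if b ∈ App i ∩ S then (1 : ℚ) / #(App i ∩ S) else 0 := by
  simp only [pavScore_eq_sum_harmonic, ← sum_sub_distrib, inter_erase]
  refine sum_congr rfl fun i _ => ?_
  split_ifs with hb
  · rw [card_erase_of_mem hb]
    exact harmonic_sub_harmonic_pred (card_pos.2 ⟨b, hb⟩)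
  · rw [erase_eq_of_notMem hb, sub_self]

theorem sum_ite_mem_one_div_card_le_one {α : Type*} [DecidableEq α] (S T : Finset α) :
    ∑ b ∈ S, (if b ∈ T then (1 : ℚ) / #T else 0) ≤ 1 := by
  rw [sum_ite_mem, sum_const, nsmul_eq_mul, mul_one_div]
  exact div_le_one_of_le₀ (by exact_mod_cast card_le_card inter_subset_right) (Nat.cast_nonneg _)

theorem sum_pavScore_sub_erase_le {n m : ℕ} (App : Fin n → Finset (Fin m))
    (S : Finset (Fin m)) : ∑ b ∈ S, (pavScore App S - pavScore App (S.erase b)) ≤ n := by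
  simp only [pavScore_sub_pavScore_erase]
  rw [sum_comm]
  calc _ ≤ ∑ _i : Fin n, (1 : ℚ) := sum_le_sum fun i _ => sum_ite_mem_one_div_card_le_one _ _
    _ = n := by simp

theorem rev_seqpav_size_bound_general
    {n m : ℕ} (App : Fin n → Finset (Fin m))
    (S : Finset (Fin m)) (a : Fin m)
    (hmin : ∀ b ∈ S, pavScore App S - pavScore App (S.erase a) ≤
      pavScore App S - pavScore App (S.erase b))
    (Δ : ℚ) (hΔ : Δ = pavScore App S - pavScore App (S.erase a)) (hpos : 0 < Δ) :
    (S.card : ℚ) ≤ (n : ℚ) / Δ := by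
  rw [le_div_iff₀ hpos]
  calc (S.card : ℚ) * Δ = ∑ _b ∈ S, Δ := by rw [sum_const, nsmul_eq_mul]
    _ ≤ ∑ b ∈ S, (pavScore App S - pavScore App (S.erase b)) :=
      sum_le_sum fun b hb => hΔ ▸ hmin b hb
    _ ≤ n := sum_pavScore_sub_erase_le App S

theorem rev_seqpav_size_bound
    {n m : ℕ} (App : Fin n → Finset (Fin m)) (hApp : ∀ i, (App i).Nonempty)
    (S : Finset (Fin m)) (a : Fin m) (ha : a ∈ S)
    (hmin : ∀ b ∈ S, pavScore App S - pavScore App (S.erase a) ≤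
      pavScore App S - pavScore App (S.erase b))
    (Δ : ℚ) (hΔ : Δ = pavScore App S - pavScore App (S.erase a)) (hpos : 0 < Δ) :
    (S.card : ℚ) ≤ (n : ℚ) / Δ :=
  rev_seqpav_size_bound_general App S a hmin Δ hΔ hpos
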